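/- Let G be an alternating labeled graph on n vertices (k + l = n + 2, where k and l are the numbers of circles in the A-state and B-state). Then G is adequate if and only if G has no isolated vertices. -/

import Mathlib

/-! Since a state's corank never exceeds its size, `k + l = n + 2` forces the adjacency matrices
of both the A-state and the B-state to vanish: the `−` vertices and the `+` vertices are
independent sets. A state next to the A-state either drops a vertex, which cannot raise the
corank, or adds a vertex `x`; the corank then grows by one exactly when `x` has no neighbour in
the A-state, i.e. (the B-state being independent) when `x` is isolated. Symmetrically for the
B-state. -/

open Matrix LaurentPolynomial
open scoped Classical

noncomputable section

def adjMatS {V : Type} (G : SimpleGraph V) (s : Finset V) : Matrix s s (ZMod 2) :=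
  fun i j => if G.Adj i.1 j.1 then 1 else 0

def corankS {V : Type} (G : SimpleGraph V) (s : Finset V) : ℕ :=
  s.card - (adjMatS G s).rank

def adjMat {V : Type} [Fintype V] (G : SimpleGraph V) : Matrix V V (ZMod 2) :=
  fun i j => if G.Adj i j then 1 else 0

def corankM {m : Type} [Fintype m] (M : Matrix m m (ZMod 2)) : ℕ :=
  Fintype.card m - M.rank

def alphaCount {V : Type} [Fintype V] (σ : V → Bool) (s : Finset V) : ℕ :=
  (s.filter (fun i => σ i = false)).card + ((sᶜ).filter (fun i => σ i = true)).card

def bracket {V : Type} [Fintype V] (G : SimpleGraph V) (σ : V → Bool) : LaurentPolynomial ℚ :=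
  ∑ s : Finset V, T (2 * (alphaCount σ s : ℤ) - (Fintype.card V : ℤ)) *
    (-T 2 - T (-2)) ^ (corankS G s)

def lspan (p : LaurentPolynomial ℚ) : ℤ := (p.coeff.support.max.unbotD 0) - (p.coeff.support.min.untopD 0)

def Bmat {V : Type} [Fintype V] (G : SimpleGraph V) (x : V) : Matrix V V (ZMod 2) :=
  adjMat G + 1 + Matrix.single x x 1

def writhe {V : Type} [Fintype V] (G : SimpleGraph V) (σ : V → Bool) : ℤ :=
  ∑ x, (-1 : ℤ) ^ (corankM (Bmat G x)) * (if σ x then 1 else -1)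

def extAdj {V : Type} (G : SimpleGraph V) (N : Set V) : V ⊕ Bool → V ⊕ Bool → Prop
  | .inl i, .inl j => G.Adj i j
  | .inl i, .inr _ => i ∈ N
  | .inr _, .inl j => j ∈ N
  | .inr _, .inr _ => False

def ext2 {V : Type} (G : SimpleGraph V) (N : Set V) : SimpleGraph (V ⊕ Bool) where
  Adj := extAdj G N
  symm := ⟨by
    rintro (i|b) (j|c) h
    · exact G.adj_symm h
    · exact h
    · exact h
    · exact h⟩
  loopless := ⟨by
    rintro (i|b) h
    · exact G.irrefl h
    · exact h⟩

def optExt {V : Type} (G : SimpleGraph V) : SimpleGraph (Option V) where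
  Adj x y := match x, y with
    | some i, some j => G.Adj i j
    | _, _ => False
  symm := ⟨by
    rintro (_|i) (_|j) h
    · exact h
    · exact h
    · exact h
    · exact G.adj_symm h⟩
  loopless := ⟨by
    rintro (_|i) h
    · exact h
    · exact G.irrefl h⟩

theorem Matrix.rank_eq_zero_iff {m n K : Type*} [Fintype n] [Field K] (M : Matrix m n K) :
    M.rank = 0 ↔ M = 0 := by
  rw [Matrix.rank, Submodule.finrank_eq_zero, LinearMap.range_eq_bot, ← Matrix.toLin'_apply',
    LinearEquiv.map_eq_zero_iff]

section Corank

variable {V : Type} (G : SimpleGraph V)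

theorem adjMatS_eq_zero_iff (s : Finset V) : adjMatS G s = 0 ↔ G.IsIndepSet s := by
  constructor
  · intro h i hi j hj _ hadj
    simpa [adjMatS, hadj] using congrFun (congrFun h ⟨i, hi⟩) ⟨j, hj⟩
  · intro h
    ext i j
    have : ¬ G.Adj i j := fun hadj => h i.2 j.2 hadj.ne (by simpa using hadj)
    simp [adjMatS, this]

theorem corankS_le_card (s : Finset V) : corankS G s ≤ s.card := Nat.sub_le _ _

theorem corankS_eq_card_iff (s : Finset V) : corankS G s = s.card ↔ G.IsIndepSet s := by
  have hle : (adjMatS G s).rank ≤ s.card := by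
    simpa using (adjMatS G s).rank_le_card_width
  rw [← adjMatS_eq_zero_iff, ← Matrix.rank_eq_zero_iff, corankS]
  omega

end Corank

theorem Finset.symmDiff_singleton_of_mem {α : Type*} [DecidableEq α] {s : Finset α} {a : α}
    (h : a ∈ s) : symmDiff s {a} = s.erase a := by
  ext b
  by_cases hb : b = a <;> simp [Finset.mem_symmDiff, hb, h]

theorem Finset.symmDiff_singleton_of_notMem {α : Type*} [DecidableEq α] {s : Finset α} {a : α}
    (h : a ∉ s) : symmDiff s {a} = insert a s := by
  ext b
  by_cases hb : b = a <;> simp [Finset.mem_symmDiff, hb, h]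

section Adequacy

variable {V : Type} (G : SimpleGraph V) {F : Finset V}

theorem corankS_insert_eq_succ_iff (hF : G.IsIndepSet F) {x : V} (hx : x ∉ F) :
    corankS G (insert x F) = corankS G F + 1 ↔ ∀ y ∈ F, ¬ G.Adj x y := by
  rw [(corankS_eq_card_iff G F).2 hF, ← Finset.card_insert_of_notMem hx, corankS_eq_card_iff,
    Finset.coe_insert, SimpleGraph.IsIndepSet, Set.pairwise_insert_of_notMem hx]
  simp only [G.adj_comm _ x, and_self]
  exact and_iff_right hF

theorem mem_of_adj_of_isIndepSet_compl [Fintype V] (hFc : G.IsIndepSet ↑Fᶜ) {x y : V}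
    (hx : x ∉ F) (hxy : G.Adj x y) : y ∈ F := by
  by_contra hy
  exact hFc (Finset.mem_compl.2 hx) (Finset.mem_compl.2 hy) hxy.ne hxy

theorem forall_corankS_symmDiff_singleton_ne_succ_iff [Fintype V] (hF : G.IsIndepSet F)
    (hFc : G.IsIndepSet ↑Fᶜ) :
    (∀ x, corankS G (symmDiff F {x}) ≠ corankS G F + 1) ↔ ∀ x ∉ F, ∃ y, G.Adj x y := by
  refine forall_congr' fun x => ?_
  by_cases hx : x ∈ F
  · have hle := corankS_le_card G (F.erase x)
    have hcard := Finset.card_erase_of_mem hx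
    have hFcard := (corankS_eq_card_iff G F).2 hF
    simp only [hx, not_true_eq_false, IsEmpty.forall_iff, iff_true,
      Finset.symmDiff_singleton_of_mem hx]
    omega
  · rw [Finset.symmDiff_singleton_of_notMem hx, Ne, corankS_insert_eq_succ_iff G hF hx]
    simp only [hx, not_false_eq_true, forall_true_left, not_forall, not_not]
    exact ⟨fun ⟨y, _, hxy⟩ => ⟨y, hxy⟩,
      fun ⟨y, hxy⟩ => ⟨y, mem_of_adj_of_isIndepSet_compl G hFc hx hxy, hxy⟩⟩

theorem isIndepSet_and_isIndepSet_compl_of_corankS_add_corankS_compl [Fintype V]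
    (h : corankS G F + corankS G Fᶜ = Fintype.card V) :
    G.IsIndepSet F ∧ G.IsIndepSet ↑Fᶜ := by
  have hF := corankS_le_card G F
  have hFc := corankS_le_card G Fᶜ
  have hcard := F.card_add_card_compl
  rw [← corankS_eq_card_iff, ← corankS_eq_card_iff]
  omega

end Adequacy

/-- An alternating labeled graph is adequate iff it has no isolated vertices. -/
theorem alternating_adequate_iff {V : Type} [Fintype V] (G : SimpleGraph V)
    (σ : V → Bool)
    (halt : corankS G (Finset.univ.filter (fun i => σ i = false)) +
      corankS G (Finset.univ.filter (fun i => σ i = true)) = Fintype.card V) :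
    ((∀ x : V, corankS G (symmDiff (Finset.univ.filter (fun i => σ i = false)) {x}) ≠
        corankS G (Finset.univ.filter (fun i => σ i = false)) + 1) ∧
     (∀ x : V, corankS G (symmDiff (Finset.univ.filter (fun i => σ i = true)) {x}) ≠
        corankS G (Finset.univ.filter (fun i => σ i = true)) + 1)) ↔
    (∀ x : V, ∃ y : V, G.Adj x y) := by
  set F := Finset.univ.filter (fun i => σ i = false)
  have hplus : Finset.univ.filter (fun i => σ i = true) = Fᶜ := by
    ext i
    simp [F]
  rw [hplus] at halt ⊢
  obtain ⟨hF, hFc⟩ := isIndepSet_and_isIndepSet_compl_of_corankS_add_corankS_compl G halt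
  rw [forall_corankS_symmDiff_singleton_ne_succ_iff G hF hFc,
    forall_corankS_symmDiff_singleton_ne_succ_iff G hFc (by rwa [compl_compl])]
  simp only [Finset.mem_compl, not_not]
  exact ⟨fun ⟨hAdeqA, hAdeqB⟩ x => if hx : x ∈ F then hAdeqB x hx else hAdeqA x hx,
    fun h => ⟨fun x _ => h x, fun x _ => h x⟩⟩
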